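/- Let F : ℝ^d → ℝ be ρ-smooth and μ-strongly convex with 0 < μ ≤ ρ and minimizer θ*. If θ' = θ - (1/ρ)(∇F(θ) + e), then F(θ') - F(θ*) ≤ (1 - μ/ρ)(F(θ) - F(θ*)) + (1/(2ρ))‖e‖². -/

import Mathlib

/-- One noisy gradient step on a ρ-smooth, μ-strongly convex function. -/
theorem smooth_strongly_convex_descent_step
    (d : ℕ) (F : EuclideanSpace ℝ (Fin d) → ℝ) (G : EuclideanSpace ℝ (Fin d) → EuclideanSpace ℝ (Fin d))
    (ρ μ : ℝ) (hμ : 0 < μ) (hμρ : μ ≤ ρ)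
    (hsmooth : ∀ θ θ' : EuclideanSpace ℝ (Fin d),
      F θ' ≤ F θ + (inner ℝ (θ' - θ) (G θ) : ℝ) + ρ / 2 * ‖θ' - θ‖ ^ 2)
    (hsc : ∀ θ θ' : EuclideanSpace ℝ (Fin d),
      F θ' ≥ F θ + (inner ℝ (θ' - θ) (G θ) : ℝ) + μ / 2 * ‖θ' - θ‖ ^ 2)
    (θstar : EuclideanSpace ℝ (Fin d)) (hmin : ∀ θ, F θstar ≤ F θ)
    (θ θ' e : EuclideanSpace ℝ (Fin d))
    (hstep : θ' = θ - (1 / ρ) • (G θ + e)) :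
    F θ' - F θstar ≤ (1 - μ / ρ) * (F θ - F θstar) + 1 / (2 * ρ) * ‖e‖ ^ 2 := by
  have hρ : (0:ℝ) < ρ := lt_of_lt_of_le hμ hμρ
  set g := G θ with hg
  -- step vector
  have hv : θ' - θ = (-(1/ρ)) • (g + e) := by
    rw [hstep]; module
  -- expand inner and norm
  have hinner : (inner ℝ (θ' - θ) g : ℝ) = -(1/ρ) * ((inner ℝ g g : ℝ) + (inner ℝ e g : ℝ)) := by
    rw [hv, real_inner_smul_left, inner_add_left]
  have hnorm : ‖θ' - θ‖ ^ 2 = (1/ρ)^2 * (‖g‖^2 + 2 * (inner ℝ g e : ℝ) + ‖e‖^2) := by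
    rw [hv, norm_smul, mul_pow, @norm_add_sq_real, Real.norm_eq_abs, sq_abs, neg_pow]
    ring
  have hge : (inner ℝ g e : ℝ) = (inner ℝ e g : ℝ) := real_inner_comm e g
  have hgg : (inner ℝ g g : ℝ) = ‖g‖^2 := real_inner_self_eq_norm_sq g
  have hee : (inner ℝ e e : ℝ) = ‖e‖^2 := real_inner_self_eq_norm_sq e
  -- descent inequality
  have hA : F θ' ≤ F θ - 1/(2*ρ) * ‖g‖^2 + 1/(2*ρ) * ‖e‖^2 := by
    have := hsmooth θ θ'
    rw [hinner, hnorm, hge, hgg] at this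
    have h2 : (-(1/ρ)) * (‖g‖^2 + (inner ℝ e g : ℝ)) +
        ρ/2 * ((1/ρ)^2 * (‖g‖^2 + 2*(inner ℝ e g : ℝ) + ‖e‖^2))
        = - (1/(2*ρ)) * ‖g‖^2 + 1/(2*ρ) * ‖e‖^2 := by
      field_simp
      ring
    linarith [this, h2]
  -- PL inequality: ‖g‖² ≥ 2μ(Fθ - F*)
  have hPL : 2 * μ * (F θ - F θstar) ≤ ‖g‖^2 := by
    have hs := hsc θ θstar
    rw [← hg] at hs
    set w := θstar - θ with hw
    have h0 : (0:ℝ) ≤ ‖μ • w + g‖^2 := sq_nonneg _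
    have hx : ‖μ • w + g‖^2 = μ^2 * ‖w‖^2 + 2 * (μ * (inner ℝ w g : ℝ)) + ‖g‖^2 := by
      rw [@norm_add_sq_real, norm_smul, real_inner_smul_left, mul_pow, Real.norm_eq_abs, sq_abs]
    rw [hx] at h0
    have hs' : F θ + (inner ℝ w g : ℝ) + μ/2 * ‖w‖^2 ≤ F θstar := hs
    nlinarith [h0, mul_le_mul_of_nonneg_left hs' (by positivity : (0:ℝ) ≤ 2*μ)]
  have hB : 1/(2*ρ) * (2 * μ * (F θ - F θstar)) ≤ 1/(2*ρ) * ‖g‖^2 :=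
    mul_le_mul_of_nonneg_left hPL (by positivity)
  have heq : 1/(2*ρ) * (2 * μ * (F θ - F θstar)) = μ/ρ * (F θ - F θstar) := by
    field_simp
  rw [heq] at hB
  nlinarith [hA, hB]
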